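/- Consider the subgroups of W: I₁ := ⟨(c₁ + c₅, id), (c₁, (23)), (0, (234))⟩, I₂ := ⟨(c₁, (15)(23)), (0, (234))⟩, and I₃ := ⟨(c₁, (23)), (0, (15)), (0, (234))⟩. For each J ∈ {I₁, I₂, I₃}, the centralizer of J in W is contained in the subgroup {(a, id) | a ∈ ⟨c₁, c₅⟩} or is contained in the cyclic subgroup generated by (c₅, (15)). -/

import Mathlib

/-- The group `D = {a : (ℤ/2)⁵ | a 0 + a 1 + a 2 + a 3 + a 4 = 0}`. -/
def Dcar : AddSubgroup (Fin 5 → ZMod 2) where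
  carrier := {a | a 0 + a 1 + a 2 + a 3 + a 4 = 0}
  zero_mem' := by simp
  add_mem' := by
    intro a b ha hb
    simp only [Set.mem_setOf_eq, Pi.add_apply] at *
    linear_combination ha + hb
  neg_mem' := by
    intro a ha
    simp only [Set.mem_setOf_eq, Pi.neg_apply] at *
    linear_combination -ha

lemma mem_Dcar {a : Fin 5 → ZMod 2} : a ∈ Dcar ↔ ∑ i, a i = 0 := by
  simp [Dcar, Fin.sum_univ_five]

/-- Permutation of the coordinates (`σ • a = a ∘ σ⁻¹`) as an additive
automorphism of `D`. -/
def dperm (σ : Equiv.Perm (Fin 5)) : Dcar ≃+ Dcar where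
  toFun a := ⟨(a : Fin 5 → ZMod 2) ∘ σ.symm, by
    rw [mem_Dcar]
    have := mem_Dcar.mp a.2
    simpa [Function.comp] using (Equiv.sum_comp σ.symm (a : Fin 5 → ZMod 2)).trans this⟩
  invFun a := ⟨(a : Fin 5 → ZMod 2) ∘ σ, by
    rw [mem_Dcar]
    have := mem_Dcar.mp a.2
    simpa [Function.comp] using (Equiv.sum_comp σ (a : Fin 5 → ZMod 2)).trans this⟩
  left_inv a := by ext j; simp
  right_inv a := by ext j; simp
  map_add' a b := by ext j; simp

/-- The action of `S₅` on `Multiplicative D` by permuting coordinates. -/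
def S5toAut : Equiv.Perm (Fin 5) →* MulAut (Multiplicative Dcar) where
  toFun σ := AddEquiv.toMultiplicative (dperm σ)
  map_one' := by ext a; rfl
  map_mul' σ τ := by ext a; rfl

/-- The Weyl group `W(D₅) = D ⋊ S₅`. -/
abbrev W := SemidirectProduct (Multiplicative Dcar) (Equiv.Perm (Fin 5)) S5toAut

/-- The generators `cᵢ` of `D`: zero in coordinate `i`, one elsewhere.
(Coordinates `1,…,5` are indexed by `0,…,4 : Fin 5`.) -/
def c (i : Fin 5) : Dcar :=
  ⟨fun j => if j = i then 0 else 1, by rw [mem_Dcar]; fin_cases i <;> decide⟩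

/-- The element `(a, σ)` of `W = D ⋊ S₅`. -/
def w (a : Dcar) (σ : Equiv.Perm (Fin 5)) : W := ⟨Multiplicative.ofAdd a, σ⟩

/-- The 3-cycle `(123)` (on coordinates labelled `1,…,5`). -/
def σ123 : Equiv.Perm (Fin 5) := Equiv.swap 0 1 * Equiv.swap 1 2

/-- The 3-cycle `(234)` (on coordinates labelled `1,…,5`). -/
def σ234 : Equiv.Perm (Fin 5) := Equiv.swap 1 2 * Equiv.swap 2 3

/-- The subgroup `I₁ = ⟨(c₁+c₅, id), (c₁, (23)), (0, (234))⟩` of `W`. -/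
def I₁ : Subgroup W :=
  Subgroup.closure {w (c 0 + c 4) 1, w (c 0) (Equiv.swap 1 2), w 0 σ234}

/-- The subgroup `I₂ = ⟨(c₁, (15)(23)), (0, (234))⟩` of `W`. -/
def I₂ : Subgroup W :=
  Subgroup.closure {w (c 0) (Equiv.swap 0 4 * Equiv.swap 1 2), w 0 σ234}

/-- The subgroup `I₃ = ⟨(c₁, (23)), (0, (15)), (0, (234))⟩` of `W`. -/
def I₃ : Subgroup W :=
  Subgroup.closure {w (c 0) (Equiv.swap 1 2), w 0 (Equiv.swap 0 4), w 0 σ234}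

/-!
An element `(a, σ)` commutes with `(b, τ)` iff `σ` commutes with `τ` and
`a + σ • b = b + τ • a`. Commuting with `(0, (234))` forces `a` to be fixed by `(234)`, so
`a ∈ ⟨c₁, c₅⟩ = {0, c₁, c₅, c₁ + c₅}`; commuting moreover with `(c₁, (23))` or `(c₁, (15)(23))`
forces `σ ∈ {id, (15)}`. Among these eight candidates the `D`-part of the condition for
`(c₁, (23))` rules out `σ = (15)`, and the one for `(c₁, (15)(23))` leaves `(0, id)`,
`(c₅, (15))`, `(c₁ + c₅, id)` and `(c₁, (15))`, the powers of `(c₅, (15))`.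
-/

open Equiv Subgroup

lemma exists_eq_w (g : W) : ∃ a σ, g = w a σ :=
  ⟨Multiplicative.toAdd g.left, g.right, rfl⟩

lemma w_mul_w (a b : Dcar) (σ τ : Perm (Fin 5)) :
    w a σ * w b τ = w (a + dperm σ b) (σ * τ) :=
  rfl

lemma w_inj {a b : Dcar} {σ τ : Perm (Fin 5)} : w a σ = w b τ ↔ a = b ∧ σ = τ := by
  simp [w, SemidirectProduct.ext_iff]

lemma w_zero_one : w 0 1 = 1 :=
  rfl

lemma commute_w_iff {a b : Dcar} {σ τ : Perm (Fin 5)} :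
    Commute (w a σ) (w b τ) ↔ a + dperm σ b = b + dperm τ a ∧ Commute σ τ := by
  rw [Commute, SemiconjBy, w_mul_w, w_mul_w, w_inj]
  rfl

lemma commute_w_zero_iff {a : Dcar} {σ τ : Perm (Fin 5)} :
    Commute (w a σ) (w 0 τ) ↔ dperm τ a = a ∧ Commute σ τ := by
  rw [commute_w_iff, map_zero, add_zero, zero_add, eq_comm]

lemma eq_zero_or_c_of_dperm_σ234_eq {a : Dcar} (h : dperm σ234 a = a) :
    a = 0 ∨ a = c 0 ∨ a = c 4 ∨ a = c 0 + c 4 := by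
  have key : ∀ v : Fin 5 → ZMod 2, ∑ i, v i = 0 → v ∘ σ234.symm = v →
      v = ((0 : Dcar) : Fin 5 → ZMod 2) ∨ v = (c 0 : Fin 5 → ZMod 2) ∨
        v = (c 4 : Fin 5 → ZMod 2) ∨ v = ((c 0 + c 4 : Dcar) : Fin 5 → ZMod 2) := by
    decide
  simpa only [Subtype.ext_iff] using key a (mem_Dcar.1 a.2) (congrArg Subtype.val h)

set_option maxRecDepth 10000 in
lemma eq_one_or_swap_of_commute_swap_of_commute_σ234 {σ : Perm (Fin 5)}
    (h₁ : Commute σ (swap 1 2)) (h₂ : Commute σ σ234) : σ = 1 ∨ σ = swap 0 4 := by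
  revert σ
  unfold Commute SemiconjBy
  decide

set_option maxRecDepth 10000 in
lemma eq_one_or_swap_of_commute_swap_mul_swap_of_commute_σ234 {σ : Perm (Fin 5)}
    (h₁ : Commute σ (swap 0 4 * swap 1 2)) (h₂ : Commute σ σ234) :
    σ = 1 ∨ σ = swap 0 4 := by
  revert σ
  unfold Commute SemiconjBy
  decide

lemma w_c_swap_sq : w (c 4) (swap 0 4) ^ 2 = w (c 0 + c 4) 1 := by
  rw [pow_two, w_mul_w, w_inj]
  constructor <;> decide

lemma w_c_swap_pow_three : w (c 4) (swap 0 4) ^ 3 = w (c 0) (swap 0 4) := by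
  rw [pow_succ, w_c_swap_sq, w_mul_w, w_inj]
  constructor <;> decide

lemma centralizer_subset_of_mem {J : Subgroup W} (h₁ : w (c 0) (swap 1 2) ∈ J)
    (h₂ : w 0 σ234 ∈ J) :
    (centralizer (J : Set W) : Set W) ⊆
      {g | ∃ a ∈ AddSubgroup.closure ({c 0, c 4} : Set Dcar), g = w a 1} := by
  intro g hg
  obtain ⟨a, σ, rfl⟩ := exists_eq_w g
  obtain ⟨hac, hσ₁⟩ := commute_w_iff.1 (mem_centralizer_iff.1 hg _ h₁).symm
  obtain ⟨ha, hσ₂⟩ := commute_w_zero_iff.1 (mem_centralizer_iff.1 hg _ h₂).symm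
  have hc₀ : c 0 ∈ AddSubgroup.closure ({c 0, c 4} : Set Dcar) :=
    AddSubgroup.subset_closure (by simp)
  have hc₄ : c 4 ∈ AddSubgroup.closure ({c 0, c 4} : Set Dcar) :=
    AddSubgroup.subset_closure (by simp)
  rcases eq_one_or_swap_of_commute_swap_of_commute_σ234 hσ₁ hσ₂ with rfl | rfl
  · refine ⟨a, ?_, rfl⟩
    rcases eq_zero_or_c_of_dperm_σ234_eq ha with rfl | rfl | rfl | rfl
    exacts [zero_mem _, hc₀, hc₄, add_mem hc₀ hc₄]
  · exfalso
    rcases eq_zero_or_c_of_dperm_σ234_eq ha with rfl | rfl | rfl | rfl <;> revert hac <;> decide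

lemma centralizer_le_zpowers_of_mem {J : Subgroup W}
    (h₁ : w (c 0) (swap 0 4 * swap 1 2) ∈ J) (h₂ : w 0 σ234 ∈ J) :
    centralizer (J : Set W) ≤ zpowers (w (c 4) (swap 0 4)) := by
  intro g hg
  obtain ⟨a, σ, rfl⟩ := exists_eq_w g
  obtain ⟨hac, hσ₁⟩ := commute_w_iff.1 (mem_centralizer_iff.1 hg _ h₁).symm
  obtain ⟨ha, hσ₂⟩ := commute_w_zero_iff.1 (mem_centralizer_iff.1 hg _ h₂).symm
  rcases eq_one_or_swap_of_commute_swap_mul_swap_of_commute_σ234 hσ₁ hσ₂ with rfl | rfl <;>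
    rcases eq_zero_or_c_of_dperm_σ234_eq ha with rfl | rfl | rfl | rfl
  all_goals first
    | exact absurd hac (by decide)
    | exact w_zero_one ▸ one_mem _
    | exact mem_zpowers _
    | exact w_c_swap_sq ▸ npow_mem_zpowers _ 2
    | exact w_c_swap_pow_three ▸ npow_mem_zpowers _ 3

/-- For each `J ∈ {I₁, I₂, I₃}`, the centralizer of `J` in `W`
is contained in `{(a, id) | a ∈ ⟨c₁, c₅⟩}` or in the cyclic subgroup generated
by `(c₅, (15))`. -/
theorem centralizer_of_splitting_groups :
    ∀ J ∈ ({I₁, I₂, I₃} : Set (Subgroup W)),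
      ((Subgroup.centralizer (J : Set W) : Set W) ⊆
          {g : W | ∃ a ∈ AddSubgroup.closure ({c 0, c 4} : Set Dcar), g = w a 1}) ∨
        Subgroup.centralizer (J : Set W) ≤
          Subgroup.zpowers (w (c 4) (Equiv.swap 0 4)) := by
  rintro J (rfl | rfl | rfl)
  · exact .inl (centralizer_subset_of_mem (subset_closure (by simp)) (subset_closure (by simp)))
  · exact .inr
      (centralizer_le_zpowers_of_mem (subset_closure (by simp)) (subset_closure (by simp)))
  · exact .inl (centralizer_subset_of_mem (subset_closure (by simp)) (subset_closure (by simp)))
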